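/- For p ∈ [0,1], let μ_p = (p/2)(δ_{e₃} + δ_{−e₃}) + (1−p)·ν, where e₃ = (0,0,1) and ν is the uniform probability measure on the equator E = {(cos φ, sin φ, 0) : φ ∈ [0,2π)} of the unit sphere S² of ℝ³. Then g*(μ_p) = √(p² + 4(1−p)²/π²). This quantity is minimized over p ∈ [0,1] uniquely at p = 4/(4+π²), where it equals 2/√(4+π²). Consequently, every Borel probability measure μ on S² supported on E ∪ {e₃, −e₃} satisfies g*(μ) ≥ 2/√(4+π²). -/

import Mathlib

open MeasureTheory Real
open scoped ENNReal

noncomputable section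

abbrev E3 := EuclideanSpace ℝ (Fin 3)

/-- The unit sphere S² in ℝ³. -/
def unitSphere : Set E3 := Metric.sphere (0 : E3) 1

/-- `g C μ` is the supremum over unit vectors `v` of `∫ √(C² + (1−C²)⟨r,v⟩²) dμ(r)`. -/
def g (C : ℝ) (μ : Measure E3) : ℝ :=
  ⨆ v : unitSphere, ∫ r, Real.sqrt (C ^ 2 + (1 - C ^ 2) * (inner ℝ r (v : E3) : ℝ) ^ 2) ∂μ


/-- `gstar μ` is the supremum over unit vectors `v` of `∫ |⟨r,v⟩| dμ(r)`. -/
def gstar (μ : Measure E3) : ℝ :=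
  ⨆ v : unitSphere, ∫ r, |(inner ℝ r (v : E3) : ℝ)| ∂μ


/-- The point `(cos φ, sin φ, 0)` on the equator of the unit sphere. -/
def eqPt (φ : ℝ) : E3 := (WithLp.equiv 2 (Fin 3 → ℝ)).symm ![Real.cos φ, Real.sin φ, 0]

/-- The uniform probability measure on the equator: the pushforward of the normalized
Lebesgue measure on `[0, 2π)` under `φ ↦ (cos φ, sin φ, 0)`. -/
def equatorUniform : Measure E3 :=
  Measure.map eqPt ((ENNReal.ofReal (2 * π))⁻¹ • volume.restrict (Set.Ico 0 (2 * π)))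

/-- The north pole `e₃ = (0,0,1)`. -/
def northPole : E3 := EuclideanSpace.single (2 : Fin 3) (1 : ℝ)

/-- The equator+Z measure `μ_p = (p/2)(δ_{e₃} + δ_{−e₃}) + (1−p)·ν`, where `ν` is the uniform
probability measure on the equator. -/
def equatorZ (p : ℝ) : Measure E3 :=
  ENNReal.ofReal (p / 2) • (Measure.dirac northPole + Measure.dirac (-northPole))
    + ENNReal.ofReal (1 - p) • equatorUniform

/-!
Write a unit vector as `v = s • w + c • e₃` with `w` horizontal. For `r` on the equator or at a
pole, `|⟪r, v⟫| = s |⟪r, w⟫| + c |r₂|`, and the average of `|⟪r, eqPt ψ⟫|` over `ψ` is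
`(2/π) √(r₀² + r₁²) = (2/π)(1 - |r₂|)`. So with `t = ∫ |r₂| dμ`, Fubini yields a horizontal `w`
with `∫ |⟪r, w⟫| dμ ≥ (2/π)(1 - t)`, and the best `(s, c)` gives
`g*(μ) ≥ √(t² + 4(1 - t)²/π²)`, whose minimum over `t` is `2/√(4 + π²)`. For `μ_p` one has `t = p`
and `∫ |⟪r, v⟫| dμ_p = p |v₂| + (1 - p)(2/π) √(v₀² + v₁²)`, so by Cauchy–Schwarz the bound is
attained.
-/

open RealInnerProductSpace

@[simp] lemma eqPt_zero (φ : ℝ) : eqPt φ 0 = cos φ := rfl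
@[simp] lemma eqPt_one (φ : ℝ) : eqPt φ 1 = sin φ := rfl
@[simp] lemma eqPt_two (φ : ℝ) : eqPt φ 2 = 0 := rfl

@[simp] lemma northPole_apply (i : Fin 3) : northPole i = if i = 2 then 1 else 0 := by
  fin_cases i <;> simp [northPole]

lemma inner_eqPt_left (φ : ℝ) (v : E3) : ⟪eqPt φ, v⟫ = v 0 * cos φ + v 1 * sin φ := by
  simp [PiLp.inner_apply, Fin.sum_univ_three]

lemma inner_northPole_right (r : E3) : ⟪r, northPole⟫ = r 2 := by
  simp [northPole, EuclideanSpace.inner_single_right]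

lemma inner_northPole_left (v : E3) : ⟪northPole, v⟫ = v 2 := by
  rw [real_inner_comm, inner_northPole_right]

lemma norm_eqPt (φ : ℝ) : ‖eqPt φ‖ = 1 := by
  simp [EuclideanSpace.norm_eq, Fin.sum_univ_three]

lemma norm_northPole : ‖northPole‖ = 1 := by
  simp [northPole]

@[fun_prop]
lemma continuous_eqPt : Continuous eqPt := by
  refine (PiLp.continuous_toLp 2 _).comp (continuous_pi fun i ↦ ?_)
  fin_cases i <;> simp <;> fun_prop

lemma integral_abs_cos_sub (α : ℝ) : ∫ φ in (0)..(2 * π), |cos (φ - α)| = 4 := by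
  have hper : Function.Periodic (fun x ↦ |cos x|) π := fun x ↦ by simp [cos_add_pi]
  have hint : ∀ a b, IntervalIntegrable (fun x ↦ |cos x|) volume a b :=
    fun a b ↦ (continuous_cos.abs).intervalIntegrable a b
  calc ∫ φ in (0)..(2 * π), |cos (φ - α)|
      = ∫ x in -α..-α + (2 : ℤ) • π, |cos x| := by
        rw [intervalIntegral.integral_comp_sub_right (fun x ↦ |cos x|), zero_sub]
        congr 1
        simp only [zsmul_eq_mul, Int.cast_ofNat]
        ring
    _ = 2 * ∫ x in -(π / 2)..-(π / 2) + π, |cos x| := by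
        rw [hper.intervalIntegral_add_zsmul_eq 2 _ hint, hper.intervalIntegral_add_eq _ (-(π / 2))]
        simp
    _ = 2 * ∫ x in -(π / 2)..π / 2, cos x := by
        congr 1
        rw [show -(π / 2) + π = π / 2 by ring]
        refine intervalIntegral.integral_congr fun x hx ↦ abs_of_nonneg (cos_nonneg_of_mem_Icc ?_)
        rwa [Set.uIcc_of_le (by linarith [pi_pos])] at hx
    _ = 4 := by simp [integral_cos]; norm_num

lemma integral_abs_mul_cos_add_mul_sin (a b : ℝ) :
    ∫ φ in (0)..(2 * π), |a * cos φ + b * sin φ| = 4 * √(a ^ 2 + b ^ 2) := by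
  set z : ℂ := ⟨a, b⟩
  have ha : ‖z‖ * cos z.arg = a := Complex.norm_mul_cos_arg z
  have hb : ‖z‖ * sin z.arg = b := Complex.norm_mul_sin_arg z
  have hrot : ∀ φ, a * cos φ + b * sin φ = ‖z‖ * cos (φ - z.arg) := fun φ ↦ by
    rw [cos_sub]
    linear_combination -(cos φ * ha) - sin φ * hb
  simp_rw [hrot, abs_mul, abs_norm, intervalIntegral.integral_const_mul,
    integral_abs_cos_sub, Complex.norm_eq_sqrt_sq_add_sq]
  ring

section EquatorMeasure

variable {f : E3 → ℝ}

lemma integrable_equatorUniform (hf : Continuous f) : Integrable f equatorUniform := by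
  rw [equatorUniform, integrable_map_measure hf.aestronglyMeasurable
    continuous_eqPt.aemeasurable]
  exact ((hf.comp continuous_eqPt).integrableOn_Icc.mono_set Set.Ico_subset_Icc_self).smul_measure
    (by simp [pi_pos])

lemma integral_equatorUniform (hf : Continuous f) :
    ∫ r, f r ∂equatorUniform = (2 * π)⁻¹ * ∫ φ in (0)..(2 * π), f (eqPt φ) := by
  rw [equatorUniform, integral_map continuous_eqPt.aemeasurable hf.aestronglyMeasurable,
    integral_smul_measure, ENNReal.toReal_inv, ENNReal.toReal_ofReal (by positivity),
    integral_Ico_eq_integral_Ioo, ← integral_Ioc_eq_integral_Ioo,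
    ← intervalIntegral.integral_of_le (by positivity), smul_eq_mul]

lemma integral_equatorZ (hf : Continuous f) {p : ℝ} (hp : p ∈ Set.Icc (0 : ℝ) 1) :
    ∫ r, f r ∂equatorZ p
      = p / 2 * (f northPole + f (-northPole)) + (1 - p) * ∫ r, f r ∂equatorUniform := by
  have hN := integrable_dirac (a := northPole) (f := f) enorm_lt_top
  have hS := integrable_dirac (a := -northPole) (f := f) enorm_lt_top
  have hdirac := hN.add_measure hS
  rw [equatorZ, integral_add_measure (hdirac.smul_measure ENNReal.ofReal_ne_top)
      ((integrable_equatorUniform hf).smul_measure ENNReal.ofReal_ne_top),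
    integral_smul_measure, integral_smul_measure, integral_add_measure hN hS,
    integral_dirac, integral_dirac, ENNReal.toReal_ofReal (by linarith [hp.1]),
    ENNReal.toReal_ofReal (by linarith [hp.2]), smul_eq_mul, smul_eq_mul]

end EquatorMeasure

lemma continuous_abs_inner_left (v : E3) : Continuous fun r : E3 ↦ |⟪r, v⟫| := by
  fun_prop

lemma integral_abs_inner_equatorUniform (v : E3) :
    ∫ r, |⟪r, v⟫| ∂equatorUniform = 2 / π * √(v 0 ^ 2 + v 1 ^ 2) := by
  rw [integral_equatorUniform (continuous_abs_inner_left v)]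
  simp only [inner_eqPt_left, integral_abs_mul_cos_add_mul_sin]
  field_simp
  ring

lemma integral_abs_inner_equatorZ {p : ℝ} (hp : p ∈ Set.Icc (0 : ℝ) 1) (v : E3) :
    ∫ r, |⟪r, v⟫| ∂equatorZ p = p * |v 2| + (1 - p) * (2 / π * √(v 0 ^ 2 + v 1 ^ 2)) := by
  rw [integral_equatorZ (continuous_abs_inner_left v) hp, integral_abs_inner_equatorUniform,
    inner_neg_left, abs_neg, inner_northPole_left]
  ring

lemma mul_add_mul_le_sqrt {s c : ℝ} (h : s ^ 2 + c ^ 2 = 1) (a b : ℝ) :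
    s * a + c * b ≤ √(a ^ 2 + b ^ 2) :=
  (le_abs_self _).trans <| abs_le_sqrt <| by nlinarith [sq_nonneg (s * b - c * a)]

lemma exists_mul_add_mul_eq_sqrt {a b : ℝ} (ha : 0 ≤ a) (hb : 0 ≤ b) :
    ∃ s c : ℝ, 0 ≤ s ∧ 0 ≤ c ∧ s ^ 2 + c ^ 2 = 1 ∧ s * a + c * b = √(a ^ 2 + b ^ 2) := by
  rcases eq_or_lt_of_le (sqrt_nonneg (a ^ 2 + b ^ 2)) with hN | hN
  · refine ⟨1, 0, zero_le_one, le_rfl, by norm_num, ?_⟩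
    have hab := sqrt_eq_zero'.1 hN.symm
    have ha : a ^ 2 = 0 := by nlinarith [sq_nonneg a, sq_nonneg b]
    rw [← hN, pow_eq_zero_iff two_ne_zero |>.1 ha]
    ring
  · have hsq := sq_sqrt (add_nonneg (sq_nonneg a) (sq_nonneg b))
    refine ⟨a / √(a ^ 2 + b ^ 2), b / √(a ^ 2 + b ^ 2), by positivity, by positivity, ?_, ?_⟩
    · field_simp
      linarith
    · field_simp
      linarith

def equatorZProfile (p : ℝ) : ℝ := √(p ^ 2 + 4 * (1 - p) ^ 2 / π ^ 2)

lemma sq_add_four_mul_sq_div_pi_sq (p : ℝ) :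
    p ^ 2 + 4 * (1 - p) ^ 2 / π ^ 2
      = 4 / (4 + π ^ 2) + ((4 + π ^ 2) * p - 4) ^ 2 / (π ^ 2 * (4 + π ^ 2)) := by
  field_simp
  ring

lemma two_div_sqrt_eq_sqrt : 2 / √(4 + π ^ 2) = √(4 / (4 + π ^ 2)) := by
  rw [sqrt_div' _ (by positivity), show (4 : ℝ) = 2 ^ 2 by norm_num, sqrt_sq zero_le_two]

lemma equatorZProfile_optimal : equatorZProfile (4 / (4 + π ^ 2)) = 2 / √(4 + π ^ 2) := by
  rw [equatorZProfile, sq_add_four_mul_sq_div_pi_sq, two_div_sqrt_eq_sqrt]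
  congr 1
  field_simp
  ring

lemma two_div_sqrt_le_equatorZProfile (p : ℝ) : 2 / √(4 + π ^ 2) ≤ equatorZProfile p := by
  rw [equatorZProfile, sq_add_four_mul_sq_div_pi_sq, two_div_sqrt_eq_sqrt]
  gcongr
  exact le_add_of_nonneg_right (by positivity)

lemma two_div_sqrt_lt_equatorZProfile {p : ℝ} (hp : p ≠ 4 / (4 + π ^ 2)) :
    2 / √(4 + π ^ 2) < equatorZProfile p := by
  have hne : (4 + π ^ 2) * p - 4 ≠ 0 := by
    contrapose! hp
    field_simp
    linarith
  rw [equatorZProfile, sq_add_four_mul_sq_div_pi_sq, two_div_sqrt_eq_sqrt]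
  gcongr
  exact lt_add_of_pos_right _ (by positivity)

lemma norm_smul_add_smul_northPole {w : E3} (hw : ‖w‖ = 1) (hw2 : w 2 = 0) {s c : ℝ}
    (h : s ^ 2 + c ^ 2 = 1) : ‖s • w + c • northPole‖ = 1 := by
  have horth : ⟪s • w, c • northPole⟫ = 0 := by
    simp [real_inner_smul_left, real_inner_smul_right, inner_northPole_right, hw2]
  rw [← sq_eq_sq₀ (norm_nonneg _) zero_le_one, norm_add_sq_real, horth,
    norm_smul, norm_smul, hw, norm_northPole]
  simpa using h

lemma sq_horizontal_add_sq_vertical {v : E3} (hv : v ∈ unitSphere) :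
    √(v 0 ^ 2 + v 1 ^ 2) ^ 2 + |v 2| ^ 2 = 1 := by
  have h := congrArg (· ^ 2) (mem_sphere_zero_iff_norm.1 hv)
  simp only [EuclideanSpace.norm_eq, Fin.sum_univ_three, Real.norm_eq_abs, sq_abs, one_pow] at h
  rw [sq_sqrt (by positivity), sq_abs, ← h, sq_sqrt (by positivity)]

lemma gstar_equatorZ_eq {p : ℝ} (hp : p ∈ Set.Icc (0 : ℝ) 1) :
    gstar (equatorZ p) = equatorZProfile p := by
  set k := 2 / π * (1 - p) with hk_def
  have hk : 0 ≤ k := mul_nonneg (by positivity) (sub_nonneg.2 hp.2)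
  have hprofile : equatorZProfile p = √(k ^ 2 + p ^ 2) := by
    rw [equatorZProfile]
    congr 1
    rw [hk_def]
    ring
  have hF : ∀ v : E3, ∫ r, |⟪r, v⟫| ∂equatorZ p = k * √(v 0 ^ 2 + v 1 ^ 2) + p * |v 2| := by
    intro v
    rw [integral_abs_inner_equatorZ hp]
    ring
  rw [hprofile]
  refine IsGreatest.csSup_eq ⟨?_, ?_⟩
  · obtain ⟨s, c, hs, hc, hsc, hval⟩ := exists_mul_add_mul_eq_sqrt hk hp.1
    refine ⟨⟨s • eqPt 0 + c • northPole, mem_sphere_zero_iff_norm.2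
      (norm_smul_add_smul_northPole (norm_eqPt 0) (eqPt_two 0) hsc)⟩, ?_⟩
    simp [hF, sqrt_sq hs, abs_of_nonneg hc, ← hval]
    ring
  · rintro _ ⟨⟨v, hv⟩, rfl⟩
    dsimp only
    rw [hF, mul_comm k, mul_comm p]
    exact mul_add_mul_le_sqrt (sq_horizontal_add_sq_vertical hv) k p

section LowerBound

variable {μ : Measure E3}

lemma integrable_abs_inner (hμ : Integrable (‖·‖) μ) (v : E3) :
    Integrable (fun r ↦ |⟪r, v⟫|) μ :=
  (hμ.mul_const ‖v‖).mono' (continuous_abs_inner_left v).aestronglyMeasurable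
    (ae_of_all _ fun r ↦ by simpa using abs_real_inner_le_norm r v)

lemma integral_abs_inner_le_gstar (hμ : Integrable (‖·‖) μ) {v : E3} (hv : v ∈ unitSphere) :
    ∫ r, |⟪r, v⟫| ∂μ ≤ gstar μ := by
  refine le_ciSup (f := fun u : unitSphere ↦ ∫ r, |⟪r, (u : E3)⟫| ∂μ) ⟨∫ r, ‖r‖ ∂μ, ?_⟩ ⟨v, hv⟩
  rintro _ ⟨⟨u, hu⟩, rfl⟩
  refine integral_mono (integrable_abs_inner hμ u) hμ fun r ↦ ?_
  simpa [mem_sphere_zero_iff_norm.1 hu] using abs_real_inner_le_norm r u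

lemma exists_two_div_pi_mul_integral_le_integral_abs_inner_eqPt [IsFiniteMeasure μ]
    (hμ : Integrable (‖·‖) μ) :
    ∃ ψ, 2 / π * ∫ r, √(r 0 ^ 2 + r 1 ^ 2) ∂μ ≤ ∫ r, |⟪r, eqPt ψ⟫| ∂μ := by
  set σ : Measure ℝ := volume.restrict (Set.Ioc 0 (2 * π))
  have hσ : σ Set.univ = ENNReal.ofReal (2 * π) := by simp [σ]
  have hσ0 : σ ≠ 0 := by simp [σ, Measure.restrict_eq_zero, pi_pos]
  have hint : Integrable (fun z : ℝ × E3 ↦ |⟪z.2, eqPt z.1⟫|) (σ.prod μ) :=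
    ((integrable_const (1 : ℝ)).mul_prod hμ).mono' (by fun_prop) <| ae_of_all _ fun z ↦ by
      simpa [norm_eqPt] using abs_real_inner_le_norm z.2 (eqPt z.1)
  have hcircle : ∀ r : E3, ∫ ψ, |⟪r, eqPt ψ⟫| ∂σ = 4 * √(r 0 ^ 2 + r 1 ^ 2) := fun r ↦ by
    simp only [σ, ← intervalIntegral.integral_of_le (by positivity : (0 : ℝ) ≤ 2 * π),
      ← real_inner_comm r, inner_eqPt_left, integral_abs_mul_cos_add_mul_sin]
  obtain ⟨ψ, hψ⟩ := exists_average_le hσ0 hint.integral_prod_left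
  refine ⟨ψ, le_of_eq_of_le ?_ hψ⟩
  rw [average_eq, integral_integral_swap hint, measureReal_def, hσ,
    ENNReal.toReal_ofReal (by positivity)]
  simp only [hcircle, integral_const_mul, smul_eq_mul]
  field_simp
  ring

def equatorAndPoles : Set E3 := Set.range eqPt ∪ {northPole, -northPole}

section EquatorAndPoles

variable {r : E3}

lemma norm_of_mem_equatorAndPoles (hr : r ∈ equatorAndPoles) : ‖r‖ = 1 := by
  rcases hr with ⟨φ, rfl⟩ | rfl | rfl <;> simp [norm_eqPt, norm_northPole]

lemma sqrt_horizontal_of_mem_equatorAndPoles (hr : r ∈ equatorAndPoles) :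
    √(r 0 ^ 2 + r 1 ^ 2) = 1 - |r 2| := by
  rcases hr with ⟨φ, rfl⟩ | rfl | rfl <;> simp

lemma abs_inner_smul_add_smul_northPole (hr : r ∈ equatorAndPoles) {w : E3} (hw2 : w 2 = 0)
    {s c : ℝ} (hs : 0 ≤ s) (hc : 0 ≤ c) :
    |⟪r, s • w + c • northPole⟫| = s * |⟪r, w⟫| + c * |r 2| := by
  rcases hr with ⟨φ, rfl⟩ | rfl | rfl <;>
    simp [inner_add_right, real_inner_smul_right, inner_northPole_right, inner_northPole_left,
      norm_northPole, abs_mul, abs_of_nonneg hs, abs_of_nonneg hc, hw2]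

end EquatorAndPoles

lemma two_div_sqrt_le_gstar [IsProbabilityMeasure μ] (h : ∀ᵐ r ∂μ, r ∈ equatorAndPoles) :
    2 / √(4 + π ^ 2) ≤ gstar μ := by
  have hμ : Integrable (‖·‖) μ :=
    (integrable_const (1 : ℝ)).congr (h.mono fun r hr ↦ (norm_of_mem_equatorAndPoles hr).symm)
  have hvert : Integrable (fun r : E3 ↦ |r 2|) μ := by
    simpa [inner_northPole_right] using integrable_abs_inner hμ northPole
  set t := ∫ r, |r 2| ∂μ
  set a := 2 / π * ∫ r, √(r 0 ^ 2 + r 1 ^ 2) ∂μ with ha_def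
  have ha : a = 2 / π * (1 - t) := by
    rw [ha_def, integral_congr_ae (h.mono fun r hr ↦ sqrt_horizontal_of_mem_equatorAndPoles hr),
      integral_sub (integrable_const 1) hvert]
    simp [t]
  obtain ⟨ψ, hψ⟩ := exists_two_div_pi_mul_integral_le_integral_abs_inner_eqPt hμ
  obtain ⟨s, c, hs, hc, hsc, hval⟩ :=
    exists_mul_add_mul_eq_sqrt (a := a) (b := t) (by positivity) (by positivity)
  have hv := mem_sphere_zero_iff_norm.2
    (norm_smul_add_smul_northPole (norm_eqPt ψ) (eqPt_two ψ) hsc)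
  calc 2 / √(4 + π ^ 2) ≤ equatorZProfile t := two_div_sqrt_le_equatorZProfile t
    _ = s * a + c * t := by
        rw [hval, ha, equatorZProfile]
        congr 1
        ring
    _ ≤ s * ∫ r, |⟪r, eqPt ψ⟫| ∂μ + c * t := by gcongr
    _ = ∫ r, |⟪r, s • eqPt ψ + c • northPole⟫| ∂μ := by
        rw [integral_congr_ae (h.mono fun r hr ↦
          abs_inner_smul_add_smul_northPole hr (eqPt_two ψ) hs hc),
          integral_add ((integrable_abs_inner hμ _).const_mul s) (hvert.const_mul c),
          integral_const_mul, integral_const_mul]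
    _ ≤ gstar μ := integral_abs_inner_le_gstar hμ hv

end LowerBound

theorem gstar_equatorZ :
    (∀ p ∈ Set.Icc (0 : ℝ) 1,
      gstar (equatorZ p) = Real.sqrt (p ^ 2 + 4 * (1 - p) ^ 2 / π ^ 2)) ∧
    gstar (equatorZ (4 / (4 + π ^ 2))) = 2 / Real.sqrt (4 + π ^ 2) ∧
    (∀ p ∈ Set.Icc (0 : ℝ) 1, p ≠ 4 / (4 + π ^ 2) →
      gstar (equatorZ (4 / (4 + π ^ 2))) < gstar (equatorZ p)) ∧
    (∀ μ : Measure E3, IsProbabilityMeasure μ →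
      μ (Set.range eqPt ∪ {northPole, -northPole})ᶜ = 0 →
      2 / Real.sqrt (4 + π ^ 2) ≤ gstar μ) := by
  have hopt : 4 / (4 + π ^ 2) ∈ Set.Icc (0 : ℝ) 1 :=
    ⟨by positivity, (div_le_one (by positivity)).2 (le_add_of_nonneg_right (by positivity))⟩
  refine ⟨fun p hp ↦ gstar_equatorZ_eq hp, ?_, fun p hp hne ↦ ?_,
    fun μ _ hsupp ↦ two_div_sqrt_le_gstar (mem_ae_iff.2 hsupp)⟩
  · rw [gstar_equatorZ_eq hopt, equatorZProfile_optimal]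
  · rw [gstar_equatorZ_eq hopt, gstar_equatorZ_eq hp, equatorZProfile_optimal]
    exact two_div_sqrt_lt_equatorZProfile hne
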